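/- With the construction in the context: the union ⋃_{(s,t)∈ℝ₊²} W_{(s,t)}* H is dense in L, where H = Ran(Ẽ); that is, (W, L) is the minimal unitary dilation of the isometry semigroup V = (W_{(s,t)}|_H)_{(s,t)∈ℝ₊²}. -/

import Mathlib

open MeasureTheory Complex

noncomputable section

/-- The increasing family `F : ℤ² → P(K)` built from the mutually orthogonal projections
`(P_m)_{m ≥ 1}` and `(Q_n)_{n ≥ 1}`. -/
def Fproj {K : Type*} [NormedAddCommGroup K] [InnerProductSpace ℂ K] [CompleteSpace K]
    (Pm Qn : ℕ → K →L[ℂ] K) : ℤ × ℤ → K →L[ℂ] K := fun q =>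
  if 1 ≤ q.1 ∧ q.2 = 0 then ∑ k ∈ Finset.Icc 1 q.1.toNat, Pm k
  else if q.1 = 0 ∧ 1 ≤ q.2 then ∑ k ∈ Finset.Icc 1 q.2.toNat, Qn k
  else if 1 ≤ q.1 ∧ 1 ≤ q.2 then 1
  else 0

/-- The projection-valued map `E : ℝ₊² → P(K)` of the construction (extended by `0` off
`ℝ₊²`), where `e S = 1_S(z₀)` denotes the value of the fixed character `z₀` of
`L^∞([0,1]², λ)` on the indicator of `S`. -/
def Eproj {K : Type*} [NormedAddCommGroup K] [InnerProductSpace ℂ K] [CompleteSpace K]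
    (Pm Qn : ℕ → K →L[ℂ] K) (e : Set (ℝ × ℝ) → ℂ) : ℝ × ℝ → K →L[ℂ] K := fun q =>
  if 0 ≤ q.1 ∧ 0 ≤ q.2 then
    e (Set.Icc 0 ((⌊q.1⌋ : ℝ) + 1 - q.1) ×ˢ Set.Icc 0 ((⌊q.2⌋ : ℝ) + 1 - q.2)) •
        Fproj Pm Qn (⌊q.1⌋, ⌊q.2⌋) +
    e (Set.Icc 0 ((⌊q.1⌋ : ℝ) + 1 - q.1) ×ˢ Set.Icc ((⌊q.2⌋ : ℝ) + 1 - q.2) 1) •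
        Fproj Pm Qn (⌊q.1⌋, ⌊q.2⌋ + 1) +
    e (Set.Icc ((⌊q.1⌋ : ℝ) + 1 - q.1) 1 ×ˢ Set.Icc 0 ((⌊q.2⌋ : ℝ) + 1 - q.2)) •
        Fproj Pm Qn (⌊q.1⌋ + 1, ⌊q.2⌋) +
    e (Set.Icc ((⌊q.1⌋ : ℝ) + 1 - q.1) 1 ×ˢ Set.Icc ((⌊q.2⌋ : ℝ) + 1 - q.2) 1) •
        Fproj Pm Qn (⌊q.1⌋ + 1, ⌊q.2⌋ + 1)
  else 0


open Filter Topology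
open scoped InnerProductSpace ENNReal

section aux
variable {K : Type*} [NormedAddCommGroup K] [InnerProductSpace ℂ K] [CompleteSpace K]

lemma opnorm_le_one_of_proj {A : K →L[ℂ] K} (h1 : A * A = A) (h2 : IsSelfAdjoint A) :
    ‖A‖ ≤ 1 := by
  refine ContinuousLinearMap.opNorm_le_bound _ zero_le_one fun x => ?_
  have hsq : ‖A x‖ ^ 2 ≤ ‖x‖ * ‖A x‖ := by
    have h3 : ⟪A x, A x⟫_ℂ = ⟪x, A x⟫_ℂ := by
      have hadj : ContinuousLinearMap.adjoint A = A := h2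
      calc ⟪A x, A x⟫_ℂ = ⟪x, ContinuousLinearMap.adjoint A (A x)⟫_ℂ := by
            rw [ContinuousLinearMap.adjoint_inner_right]
        _ = ⟪x, (A * A) x⟫_ℂ := by rw [hadj]; rfl
        _ = ⟪x, A x⟫_ℂ := by rw [h1]
    calc ‖A x‖ ^ 2 = RCLike.re ⟪A x, A x⟫_ℂ := by
          rw [← @inner_self_eq_norm_sq ℂ]
      _ = RCLike.re ⟪x, A x⟫_ℂ := by rw [h3]
      _ ≤ ‖⟪x, A x⟫_ℂ‖ := RCLike.re_le_norm _
      _ ≤ ‖x‖ * ‖A x‖ := norm_inner_le_norm _ _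
  nlinarith [norm_nonneg (A x), norm_nonneg x]

lemma sum_proj_norm_le_one (Pm : ℕ → K →L[ℂ] K)
    (hPP : ∀ i j, 1 ≤ i → 1 ≤ j → Pm i ∘L Pm j = if i = j then Pm i else 0)
    (hPsa : ∀ i, 1 ≤ i → IsSelfAdjoint (Pm i)) (m : ℕ) :
    ‖∑ k ∈ Finset.Icc 1 m, Pm k‖ ≤ 1 := by
  set s := Finset.Icc 1 m with hs
  refine opnorm_le_one_of_proj ?_ ?_
  · calc (∑ k ∈ s, Pm k) * (∑ k ∈ s, Pm k)
        = ∑ i ∈ s, ∑ j ∈ s, Pm i * Pm j := Finset.sum_mul_sum _ _ _ _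
      _ = ∑ i ∈ s, Pm i := by
          refine Finset.sum_congr rfl fun i hi => ?_
          rw [Finset.sum_congr rfl (fun j hj => by
            rw [show Pm i * Pm j = Pm i ∘L Pm j from rfl,
              hPP i j (Finset.mem_Icc.mp hi).1 (Finset.mem_Icc.mp hj).1])]
          rw [Finset.sum_ite_eq (s) i (fun _ => Pm i), if_pos hi]
  · show star _ = _
    rw [star_sum]
    exact Finset.sum_congr rfl fun i hi => hPsa i (Finset.mem_Icc.mp hi).1

lemma Fproj_norm_aux (Pm Qn : ℕ → K →L[ℂ] K)
    (hPP : ∀ i j, 1 ≤ i → 1 ≤ j → Pm i ∘L Pm j = if i = j then Pm i else 0)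
    (hQQ : ∀ i j, 1 ≤ i → 1 ≤ j → Qn i ∘L Qn j = if i = j then Qn i else 0)
    (hPsa : ∀ i, 1 ≤ i → IsSelfAdjoint (Pm i))
    (hQsa : ∀ i, 1 ≤ i → IsSelfAdjoint (Qn i)) (z : ℤ × ℤ) :
    ‖Fproj Pm Qn z‖ ≤ 1 := by
  unfold Fproj
  split_ifs
  · exact sum_proj_norm_le_one Pm hPP hPsa _
  · exact sum_proj_norm_le_one Qn hQQ hQsa _
  · rw [ContinuousLinearMap.one_def]; exact ContinuousLinearMap.norm_id_le
  · simp

lemma Fproj_eq_one (Pm Qn : ℕ → K →L[ℂ] K) {m n : ℤ} (hm : 1 ≤ m) (hn : 1 ≤ n) :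
    Fproj Pm Qn (m, n) = 1 := by
  unfold Fproj
  rw [if_neg (by omega), if_neg (by omega), if_pos ⟨hm, hn⟩]

end aux

section esum
variable (e : Set (ℝ × ℝ) → ℂ)
  (heuniv : e Set.univ = 1)
  (headd : ∀ S T : Set (ℝ × ℝ), MeasurableSet S → MeasurableSet T →
    (volume.restrict (Set.Icc (0 : ℝ) 1 ×ˢ Set.Icc (0 : ℝ) 1)) (S ∩ T) = 0 →
    e (S ∪ T) = e S + e T)
  (henull : ∀ S : Set (ℝ × ℝ), MeasurableSet S →
    (volume.restrict (Set.Icc (0 : ℝ) 1 ×ˢ Set.Icc (0 : ℝ) 1)) S = 0 → e S = 0)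

include heuniv headd henull

lemma e_unit_square : e (Set.Icc (0:ℝ) 1 ×ˢ Set.Icc (0:ℝ) 1) = 1 := by
  set R : Set (ℝ × ℝ) := Set.Icc (0:ℝ) 1 ×ˢ Set.Icc (0:ℝ) 1 with hR
  have hRm : MeasurableSet R := measurableSet_Icc.prod measurableSet_Icc
  have h1 : e (R ∪ Rᶜ) = e R + e Rᶜ := by
    refine headd _ _ hRm hRm.compl ?_
    rw [Set.inter_compl_self, measure_empty]
  have h2 : e Rᶜ = 0 := by
    refine henull _ hRm.compl ?_
    rw [Measure.restrict_apply hRm.compl, Set.compl_inter_self, measure_empty]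
  rw [Set.union_compl_self, heuniv, h2, add_zero] at h1
  exact h1.symm

omit heuniv henull in
lemma e_split (α : ℝ) (hα0 : 0 ≤ α) (hα1 : α ≤ 1) (A : Set ℝ) (hA : MeasurableSet A) :
    e (A ×ˢ Set.Icc (0:ℝ) 1) = e (A ×ˢ Set.Icc (0:ℝ) α) + e (A ×ˢ Set.Icc α 1) := by
  have h := headd (A ×ˢ Set.Icc (0:ℝ) α) (A ×ˢ Set.Icc α 1)
    (hA.prod measurableSet_Icc) (hA.prod measurableSet_Icc) ?_
  · rw [← Set.prod_union, Set.Icc_union_Icc_eq_Icc hα0 hα1] at h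
    exact h
  · have hnull : (volume : Measure (ℝ × ℝ))
        ((A ×ˢ Set.Icc (0:ℝ) α) ∩ (A ×ˢ Set.Icc α 1)) = 0 := by
      rw [Set.prod_inter_prod]
      refine measure_mono_null (Set.prod_mono (Set.subset_univ _)
        (show Set.Icc (0:ℝ) α ∩ Set.Icc α 1 ⊆ {α} from fun x hx =>
          le_antisymm hx.1.2 hx.2.1)) ?_
      rw [Measure.volume_eq_prod, Measure.prod_prod, Real.volume_singleton, mul_zero]
    exact le_antisymm ((Measure.restrict_apply_le _ _).trans hnull.le) zero_le

omit heuniv henull in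
lemma e_split' (α : ℝ) (hα0 : 0 ≤ α) (hα1 : α ≤ 1) (A : Set ℝ) (hA : MeasurableSet A) :
    e (Set.Icc (0:ℝ) 1 ×ˢ A) = e (Set.Icc (0:ℝ) α ×ˢ A) + e (Set.Icc α 1 ×ˢ A) := by
  have h := headd (Set.Icc (0:ℝ) α ×ˢ A) (Set.Icc α 1 ×ˢ A)
    (measurableSet_Icc.prod hA) (measurableSet_Icc.prod hA) ?_
  · rw [← Set.union_prod, Set.Icc_union_Icc_eq_Icc hα0 hα1] at h
    exact h
  · have hnull : (volume : Measure (ℝ × ℝ))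
        ((Set.Icc (0:ℝ) α ×ˢ A) ∩ (Set.Icc α 1 ×ˢ A)) = 0 := by
      rw [Set.prod_inter_prod]
      refine measure_mono_null (Set.prod_mono
        (show Set.Icc (0:ℝ) α ∩ Set.Icc α 1 ⊆ {α} from fun x hx =>
          le_antisymm hx.1.2 hx.2.1) (Set.subset_univ _)) ?_
      rw [Measure.volume_eq_prod, Measure.prod_prod, Real.volume_singleton, zero_mul]
    exact le_antisymm ((Measure.restrict_apply_le _ _).trans hnull.le) zero_le

lemma e_foursum (α β : ℝ) (hα0 : 0 ≤ α) (hα1 : α ≤ 1) (hβ0 : 0 ≤ β) (hβ1 : β ≤ 1) :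
    e (Set.Icc (0:ℝ) α ×ˢ Set.Icc (0:ℝ) β) + e (Set.Icc (0:ℝ) α ×ˢ Set.Icc β 1) +
      e (Set.Icc α 1 ×ˢ Set.Icc (0:ℝ) β) + e (Set.Icc α 1 ×ˢ Set.Icc β 1) = 1 := by
  have h1 := e_split e headd β hβ0 hβ1 (Set.Icc (0:ℝ) α) measurableSet_Icc
  have h2 := e_split e headd β hβ0 hβ1 (Set.Icc α 1) measurableSet_Icc
  have h3 := e_split' e headd α hα0 hα1 (Set.Icc (0:ℝ) 1) measurableSet_Icc
  have h4 := e_unit_square e heuniv headd henull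
  rw [h3, h1, h2] at h4
  linear_combination h4

end esum

section eproj
variable {K : Type*} [NormedAddCommGroup K] [InnerProductSpace ℂ K] [CompleteSpace K]

lemma Eproj_one_aux (Pm Qn : ℕ → K →L[ℂ] K) (e : Set (ℝ × ℝ) → ℂ)
    (heuniv : e Set.univ = 1)
    (headd : ∀ S T : Set (ℝ × ℝ), MeasurableSet S → MeasurableSet T →
      (volume.restrict (Set.Icc (0 : ℝ) 1 ×ˢ Set.Icc (0 : ℝ) 1)) (S ∩ T) = 0 →
      e (S ∪ T) = e S + e T)
    (henull : ∀ S : Set (ℝ × ℝ), MeasurableSet S →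
      (volume.restrict (Set.Icc (0 : ℝ) 1 ×ˢ Set.Icc (0 : ℝ) 1)) S = 0 → e S = 0)
    (q : ℝ × ℝ) (hq1 : 1 ≤ q.1) (hq2 : 1 ≤ q.2) :
    Eproj Pm Qn e q = 1 := by
  have hf1 : (1:ℤ) ≤ ⌊q.1⌋ := by rwa [Int.le_floor, Int.cast_one]
  have hf2 : (1:ℤ) ≤ ⌊q.2⌋ := by rwa [Int.le_floor, Int.cast_one]
  have hα0 : (0:ℝ) ≤ (⌊q.1⌋ : ℝ) + 1 - q.1 := by
    have := Int.lt_floor_add_one q.1; linarith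
  have hα1 : (⌊q.1⌋ : ℝ) + 1 - q.1 ≤ 1 := by
    have := Int.floor_le q.1; linarith
  have hβ0 : (0:ℝ) ≤ (⌊q.2⌋ : ℝ) + 1 - q.2 := by
    have := Int.lt_floor_add_one q.2; linarith
  have hβ1 : (⌊q.2⌋ : ℝ) + 1 - q.2 ≤ 1 := by
    have := Int.floor_le q.2; linarith
  unfold Eproj
  rw [if_pos ⟨le_trans zero_le_one hq1, le_trans zero_le_one hq2⟩,
    Fproj_eq_one Pm Qn hf1 hf2, Fproj_eq_one Pm Qn hf1 (by omega),
    Fproj_eq_one Pm Qn (by omega) hf2, Fproj_eq_one Pm Qn (by omega) (by omega),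
    ← add_smul, ← add_smul, ← add_smul,
    e_foursum e heuniv headd henull _ _ hα0 hα1 hβ0 hβ1, one_smul]

lemma Eproj_norm_aux (Pm Qn : ℕ → K →L[ℂ] K) (e : Set (ℝ × ℝ) → ℂ)
    (he01 : ∀ S : Set (ℝ × ℝ), e S = 0 ∨ e S = 1)
    (hF : ∀ z : ℤ × ℤ, ‖Fproj Pm Qn z‖ ≤ 1) (q : ℝ × ℝ) :
    ‖Eproj Pm Qn e q‖ ≤ 4 := by
  have he : ∀ S : Set (ℝ × ℝ), ‖e S‖ ≤ 1 := fun S => by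
    rcases he01 S with h | h <;> simp [h]
  have hterm : ∀ (S : Set (ℝ × ℝ)) (z : ℤ × ℤ), ‖e S • Fproj Pm Qn z‖ ≤ 1 := by
    intro S z
    rw [norm_smul]
    calc ‖e S‖ * ‖Fproj Pm Qn z‖ ≤ 1 * 1 :=
      mul_le_mul (he S) (hF z) (norm_nonneg _) zero_le_one
    _ = 1 := one_mul 1
  unfold Eproj
  split_ifs
  · refine le_trans (norm_add_le _ _) ?_
    refine le_trans (add_le_add (le_trans (norm_add_le _ _)
      (add_le_add (le_trans (norm_add_le _ _) (add_le_add (hterm _ _) (hterm _ _)))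
        (hterm _ _))) (hterm _ _)) ?_
    norm_num
  · simp

end eproj

set_option maxHeartbeats 1000000 in
set_option linter.unusedVariables false in
/-- The union `⋃_((s,t) ∈ ℝ₊²) W_(s,t)* H` is dense in `L = L²(ℝ², K)`, where
`H = Ran Ẽ`; that is, `(W, L)` is the minimal unitary dilation of the isometry semigroup
`V = (W_(s,t)|_H)`. -/
theorem construction_minimal_dilation
        {K : Type*} [NormedAddCommGroup K] [InnerProductSpace ℂ K] [CompleteSpace K]
    [SecondCountableTopology K]
    (Pm Qn : ℕ → K →L[ℂ] K)
    (hPP : ∀ i j, 1 ≤ i → 1 ≤ j → Pm i ∘L Pm j = if i = j then Pm i else 0)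
    (hQQ : ∀ i j, 1 ≤ i → 1 ≤ j → Qn i ∘L Qn j = if i = j then Qn i else 0)
    (hPsa : ∀ i, 1 ≤ i → IsSelfAdjoint (Pm i))
    (hQsa : ∀ i, 1 ≤ i → IsSelfAdjoint (Qn i))
    (a b c d : ℝ) (ha : a ∈ Set.Ioo (0 : ℝ) 1) (hb : b ∈ Set.Ioo (0 : ℝ) 1)
    (hc : c ∈ Set.Ioo (0 : ℝ) 1) (hd : d ∈ Set.Ioo (0 : ℝ) 1) (hab : a < b) (hcd : c < d)
    -- `e S = 1_S(z₀)` for a character `z₀` of `L^∞([0,1]², λ)`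
    (e : Set (ℝ × ℝ) → ℂ)
    (he01 : ∀ S : Set (ℝ × ℝ), e S = 0 ∨ e S = 1)
    (heuniv : e Set.univ = 1)
    (hemul : ∀ S T : Set (ℝ × ℝ), MeasurableSet S → MeasurableSet T →
      e (S ∩ T) = e S * e T)
    (headd : ∀ S T : Set (ℝ × ℝ), MeasurableSet S → MeasurableSet T →
      (volume.restrict (Set.Icc (0 : ℝ) 1 ×ˢ Set.Icc (0 : ℝ) 1)) (S ∩ T) = 0 →
      e (S ∪ T) = e S + e T)
    (henull : ∀ S : Set (ℝ × ℝ), MeasurableSet S →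
      (volume.restrict (Set.Icc (0 : ℝ) 1 ×ˢ Set.Icc (0 : ℝ) 1)) S = 0 → e S = 0)
    (hz₀ : e (Set.Icc a b ×ˢ Set.Icc c d) ≠ 0)
    -- the operators `U`, `W` and the projection `Ẽ` on `L = L²(ℝ², K)`
    (U : ℝ × ℝ → Lp K 2 (volume : Measure (ℝ × ℝ)) →L[ℂ] Lp K 2 (volume : Measure (ℝ × ℝ)))
    (W : ℝ × ℝ → Lp K 2 (volume : Measure (ℝ × ℝ)) →L[ℂ] Lp K 2 (volume : Measure (ℝ × ℝ)))
    (Etil : Lp K 2 (volume : Measure (ℝ × ℝ)) →L[ℂ] Lp K 2 (volume : Measure (ℝ × ℝ)))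
    (hUdef : ∀ (x y : ℝ) (f : Lp K 2 (volume : Measure (ℝ × ℝ))),
      ⇑(U (x, y) f) =ᵐ[volume] fun q : ℝ × ℝ =>
        Complex.exp (Complex.I * ((q.1 * x + q.2 * y : ℝ) : ℂ)) • (f : ℝ × ℝ → K) q)
    (hWdef : ∀ (s t : ℝ) (f : Lp K 2 (volume : Measure (ℝ × ℝ))),
      ⇑(W (s, t) f) =ᵐ[volume] fun q : ℝ × ℝ => (f : ℝ × ℝ → K) (q.1 - s, q.2 - t))
    (hEdef : ∀ f : Lp K 2 (volume : Measure (ℝ × ℝ)),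
      ⇑(Etil f) =ᵐ[volume] fun q : ℝ × ℝ => Eproj Pm Qn e q ((f : ℝ × ℝ → K) q)) :
    Dense (⋃ p ∈ {q : ℝ × ℝ | 0 ≤ q.1 ∧ 0 ≤ q.2},
      ContinuousLinearMap.adjoint (W p) '' Set.range ⇑Etil) := by
  have hFnorm : ∀ z, ‖Fproj Pm Qn z‖ ≤ 1 := Fproj_norm_aux Pm Qn hPP hQQ hPsa hQsa
  have hEnorm : ∀ q, ‖Eproj Pm Qn e q‖ ≤ 4 := Eproj_norm_aux Pm Qn e he01 hFnorm
  have hEone : ∀ q : ℝ × ℝ, 1 ≤ q.1 → 1 ≤ q.2 → Eproj Pm Qn e q = 1 := fun q h1 h2 =>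
    Eproj_one_aux Pm Qn e heuniv headd henull q h1 h2
  -- W is an isometry
  have hWnorm : ∀ (s t : ℝ) (g : Lp K 2 (volume : Measure (ℝ × ℝ))), ‖W (s, t) g‖ = ‖g‖ := by
    intro s t g
    rw [Lp.norm_def, Lp.norm_def, eLpNorm_congr_ae (hWdef s t g)]
    congr 1
    exact eLpNorm_comp_measurePreserving (Lp.aestronglyMeasurable g)
      (measurePreserving_sub_right volume ((s, t) : ℝ × ℝ))
  have hWadj : ∀ s t : ℝ, ContinuousLinearMap.adjoint (W (s, t)) ∘L W (s, t) = 1 := fun s t =>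
    (ContinuousLinearMap.norm_map_iff_adjoint_comp_self (W (s, t))).mp (hWnorm s t)
  have hWopnorm : ∀ s t : ℝ, ‖ContinuousLinearMap.adjoint (W (s, t))‖ ≤ 1 := by
    intro s t
    rw [ContinuousLinearMap.adjoint.norm_map]
    exact ContinuousLinearMap.opNorm_le_bound _ zero_le_one fun x => by
      rw [hWnorm s t x, one_mul]
  rw [Metric.dense_iff]
  intro f ε hε
  set F0 : ℝ × ℝ → K := ⇑f with hF0
  set ν : Measure (ℝ × ℝ) :=
    volume.withDensity (fun u => (‖F0 u‖₊ : ℝ≥0∞) ^ (2:ℝ)) with hν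
  set B : ℕ → Set (ℝ × ℝ) := fun n => {u : ℝ × ℝ | u.1 < 1 - n ∨ u.2 < 1 - n} with hB
  have hBmeas : ∀ n, MeasurableSet (B n) := by
    intro n
    exact ((isOpen_lt continuous_fst continuous_const).union
      (isOpen_lt continuous_snd continuous_const)).measurableSet
  have hBanti : Antitone B := by
    intro m n hmn u hu
    have hcast : (m : ℝ) ≤ (n : ℝ) := Nat.cast_le.mpr hmn
    simp only [hB, Set.mem_setOf_eq] at hu ⊢
    rcases hu with h | h
    · exact Or.inl (by linarith)
    · exact Or.inr (by linarith)
  have hBempty : ⋂ n, B n = ∅ := by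
    refine Set.eq_empty_iff_forall_notMem.mpr fun u hu => ?_
    obtain ⟨n1, h1⟩ := exists_nat_gt (1 - u.1)
    obtain ⟨n2, h2⟩ := exists_nat_gt (1 - u.2)
    have hm := Set.mem_iInter.mp hu (max n1 n2)
    have c1 : (n1 : ℝ) ≤ ((max n1 n2 : ℕ) : ℝ) := Nat.cast_le.mpr (le_max_left _ _)
    have c2 : (n2 : ℝ) ≤ ((max n1 n2 : ℕ) : ℝ) := Nat.cast_le.mpr (le_max_right _ _)
    simp only [hB, Set.mem_setOf_eq] at hm
    rcases hm with h | h
    · linarith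
    · linarith
  have hfin : (∫⁻ u, (‖F0 u‖₊ : ℝ≥0∞) ^ (2:ℝ) ∂(volume : Measure (ℝ × ℝ))) ≠ ∞ := by
    have h := Lp.eLpNorm_lt_top f
    rw [eLpNorm_eq_lintegral_rpow_enorm_toReal two_ne_zero ENNReal.ofNat_ne_top] at h
    simp only [enorm_eq_nnnorm] at h
    intro hcon
    rw [show ((2:ℝ≥0∞).toReal) = (2:ℝ) by norm_num] at h
    rw [hcon] at h
    rw [ENNReal.top_rpow_of_pos (by norm_num)] at h
    exact (lt_irrefl _ h).elim
  have hνfin : ν (B 0) ≠ ∞ := by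
    refine ne_top_of_le_ne_top ?_ (measure_mono (Set.subset_univ _))
    rw [hν, withDensity_apply _ MeasurableSet.univ, setLIntegral_univ]
    exact hfin
  have htend : Tendsto (fun n => ν (B n)) atTop (𝓝 0) := by
    have h0 := tendsto_measure_iInter_atTop (μ := ν)
      (fun n => (hBmeas n).nullMeasurableSet) hBanti ⟨0, hνfin⟩
    rw [hBempty, measure_empty] at h0
    exact h0
  set δ : ℝ := ε / 10 with hδ
  have hδpos : 0 < δ := by positivity
  have hcpos : (0:ℝ≥0∞) < ENNReal.ofReal δ ^ 2 := by
    have := ENNReal.ofReal_pos.mpr hδpos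
    positivity
  obtain ⟨n, hn⟩ := (htend.eventually (gt_mem_nhds hcpos)).exists
  set p : ℝ × ℝ := ((n : ℝ), (n : ℝ)) with hp
  set g := ContinuousLinearMap.adjoint (W p) (Etil (W p f)) with hg
  have hf_eq : ContinuousLinearMap.adjoint (W p) (W p f) = f := by
    rw [← ContinuousLinearMap.comp_apply, hWadj n n, ContinuousLinearMap.one_apply]
  -- a.e. description of the difference
  have hD : ⇑(Etil (W p f) - W p f) =ᵐ[volume]
      fun q : ℝ × ℝ => Eproj Pm Qn e q (F0 (q.1 - n, q.2 - n)) - F0 (q.1 - n, q.2 - n) := by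
    filter_upwards [Lp.coeFn_sub (Etil (W p f)) (W p f), hEdef (W p f), hWdef n n f]
      with q h1 h2 h3
    rw [h1, Pi.sub_apply, h2, h3]
  -- pointwise bound
  set G : ℝ × ℝ → K := fun u => (5:ℝ) • (B n).indicator F0 u with hG
  have hb : ∀ q : ℝ × ℝ,
      ‖Eproj Pm Qn e q (F0 (q.1 - n, q.2 - n)) - F0 (q.1 - n, q.2 - n)‖ ≤
        ‖G (q.1 - n, q.2 - n)‖ := by
    intro q
    by_cases hq : 1 ≤ q.1 ∧ 1 ≤ q.2
    · rw [hEone q hq.1 hq.2, ContinuousLinearMap.one_apply, sub_self, norm_zero]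
      exact norm_nonneg _
    · have hmem : ((q.1 - n, q.2 - n) : ℝ × ℝ) ∈ B n := by
        rw [Set.mem_setOf_eq]
        by_cases h1 : 1 ≤ q.1
        · have h2 : q.2 < 1 := by
            by_contra h2; exact hq ⟨h1, le_of_not_gt h2⟩
          exact Or.inr (by dsimp only; linarith)
        · exact Or.inl (by dsimp only; push_neg at h1; linarith)
      rw [hG]
      dsimp only
      rw [Set.indicator_of_mem hmem, norm_smul]
      calc ‖Eproj Pm Qn e q (F0 (q.1 - n, q.2 - n)) - F0 (q.1 - n, q.2 - n)‖
          ≤ ‖Eproj Pm Qn e q (F0 (q.1 - n, q.2 - n))‖ + ‖F0 (q.1 - n, q.2 - n)‖ :=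
            norm_sub_le _ _
        _ ≤ 4 * ‖F0 (q.1 - n, q.2 - n)‖ + ‖F0 (q.1 - n, q.2 - n)‖ := by
            refine add_le_add ?_ le_rfl
            exact le_trans (ContinuousLinearMap.le_opNorm _ _)
              (mul_le_mul_of_nonneg_right (hEnorm q) (norm_nonneg _))
        _ = 5 * ‖F0 (q.1 - n, q.2 - n)‖ := by ring
        _ = ‖(5:ℝ)‖ * ‖F0 (q.1 - n, q.2 - n)‖ := by norm_num
  have hGmeas : AEStronglyMeasurable G (volume : Measure (ℝ × ℝ)) := by
    exact (((Lp.aestronglyMeasurable f).indicator (hBmeas n)).const_smul (5:ℝ))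
  -- the eLpNorm chain
  have hchain : eLpNorm
      (fun q : ℝ × ℝ => Eproj Pm Qn e q (F0 (q.1 - n, q.2 - n)) - F0 (q.1 - n, q.2 - n))
      2 volume ≤ ENNReal.ofReal (5 * δ) := by
    have step1 : eLpNorm
        (fun q : ℝ × ℝ => Eproj Pm Qn e q (F0 (q.1 - n, q.2 - n)) - F0 (q.1 - n, q.2 - n))
        2 volume ≤ eLpNorm (fun q : ℝ × ℝ => G (q.1 - n, q.2 - n)) 2 volume :=
      eLpNorm_mono hb
    have step2 : eLpNorm (fun q : ℝ × ℝ => G (q.1 - n, q.2 - n)) 2 volume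
        = eLpNorm G 2 volume := by
      exact eLpNorm_comp_measurePreserving hGmeas
        (measurePreserving_sub_right volume (((n:ℝ), (n:ℝ)) : ℝ × ℝ))
    have step3 : eLpNorm G 2 volume = 5 * eLpNorm ((B n).indicator F0) 2 volume := by
      rw [show G = (5:ℝ) • ((B n).indicator F0) from rfl, eLpNorm_const_smul]
      congr 1
      rw [enorm_eq_nnnorm]
      simp
    have step4 : eLpNorm ((B n).indicator F0) 2 volume = (ν (B n)) ^ (1/2 : ℝ) := by
      rw [eLpNorm_eq_lintegral_rpow_enorm_toReal two_ne_zero ENNReal.ofNat_ne_top]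
      simp only [enorm_eq_nnnorm]
      rw [show ((2:ℝ≥0∞).toReal) = (2:ℝ) by norm_num]
      congr 1
      have hpt : ∀ q : ℝ × ℝ, (‖(B n).indicator F0 q‖₊ : ℝ≥0∞) ^ (2:ℝ)
          = (B n).indicator (fun u => (‖F0 u‖₊ : ℝ≥0∞) ^ (2:ℝ)) q := by
        intro q
        by_cases h : q ∈ B n
        · rw [Set.indicator_of_mem h, Set.indicator_of_mem h]
        · rw [Set.indicator_of_notMem h, Set.indicator_of_notMem h]
          simp [ENNReal.zero_rpow_of_pos (by norm_num : (0:ℝ) < 2)]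
      simp_rw [hpt]
      rw [lintegral_indicator (hBmeas n)]
      rw [hν, withDensity_apply _ (hBmeas n)]
    have step5 : eLpNorm G 2 volume ≤ ENNReal.ofReal (5 * δ) := by
      rw [step3, step4]
      calc 5 * (ν (B n)) ^ (1/2 : ℝ)
          ≤ 5 * (ENNReal.ofReal δ ^ 2) ^ (1/2 : ℝ) :=
            mul_le_mul_right (ENNReal.rpow_le_rpow hn.le (by norm_num)) _
        _ = 5 * ENNReal.ofReal δ := by
            rw [← ENNReal.rpow_natCast (ENNReal.ofReal δ) 2, ← ENNReal.rpow_mul]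
            norm_num
        _ = ENNReal.ofReal (5 * δ) := by
            rw [ENNReal.ofReal_mul (by norm_num : (0:ℝ) ≤ 5)]
            congr 1
            simp [ENNReal.ofReal_ofNat]
    exact le_trans (step2 ▸ step1) step5
  have hnorm_small : ‖Etil (W p f) - W p f‖ ≤ 5 * δ := by
    rw [Lp.norm_def, eLpNorm_congr_ae hD]
    have hm := ENNReal.toReal_mono ENNReal.ofReal_ne_top hchain
    rwa [ENNReal.toReal_ofReal (by positivity : (0:ℝ) ≤ 5 * δ)] at hm
  refine ⟨g, ?_, ?_⟩
  · rw [Metric.mem_ball, dist_eq_norm]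
    have : g - f = ContinuousLinearMap.adjoint (W p) (Etil (W p f) - W p f) := by
      rw [map_sub, hg, hf_eq]
    rw [this]
    calc ‖ContinuousLinearMap.adjoint (W p) (Etil (W p f) - W p f)‖
        ≤ ‖ContinuousLinearMap.adjoint (W p)‖ * ‖Etil (W p f) - W p f‖ :=
          ContinuousLinearMap.le_opNorm _ _
      _ ≤ 1 * (5 * δ) := by
          refine mul_le_mul (hWopnorm n n) hnorm_small (norm_nonneg _) zero_le_one
      _ < ε := by rw [one_mul, hδ]; linarith
  · refine Set.mem_biUnion (show p ∈ {q : ℝ × ℝ | 0 ≤ q.1 ∧ 0 ≤ q.2} from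
      ⟨Nat.cast_nonneg n, Nat.cast_nonneg n⟩) ?_
    exact ⟨Etil (W p f), Set.mem_range_self _, rfl⟩
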